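/- arXiv:2405.02585 — 2 statements merged into one kernel-verified Lean document; each statement's English description precedes it below -/
import Mathlib

section
/- Let P_{XY} be a joint probability mass function on a finite set 𝒳 × 𝒴, let y ∈ 𝒴 satisfy P_Y(y) > 0, assume P_{X|Y}(x|y) > 0 for every x ∈ 𝒳 with P_X(x) > 0, and let α ∈ (0, 1]. Then for every finite set 𝒰 and every channel P_{U|X}, (∑_{u ∈ 𝒰} P_U(u)^α)^{1/α} ≤ (max_{x : P_X(x) > 0} P_X(x)/P_{X|Y}(x|y)) · (∑_{u ∈ 𝒰} P_{U|Y}(u|y)^α)^{1/α}. -/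
open Finset

/-- **Upper bound for the pointwise oblivious leakage (α-norm inequality).**
Let `P_{XY}` be a joint pmf on a finite set `𝒳 × 𝒴`, let `y` satisfy
`P_Y(y) > 0`, assume `P_{X|Y}(x|y) > 0` whenever `P_X(x) > 0`, and let
`α ∈ (0,1]`.  Then for every finite set `𝒰` (wlog `Fin n`) and every channel
`P_{U|X}`,
`(∑_u P_U(u)^α)^{1/α} ≤ (max_{x : P_X(x)>0} P_X(x)/P_{X|Y}(x|y)) · (∑_u P_{U|Y}(u|y)^α)^{1/α}`. -/
theorem alpha_norm_leakage_upper_bound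
    {X Y : Type*} [Fintype X] [Fintype Y]
    (PXY : X → Y → ℝ)
    (hnn : ∀ x y, 0 ≤ PXY x y)
    (hsum : ∑ x, ∑ y, PXY x y = 1)
    (y : Y)
    (hy : 0 < ∑ x, PXY x y)
    (habs : ∀ x, 0 < ∑ y', PXY x y' → 0 < PXY x y / ∑ x', PXY x' y)
    (α : ℝ) (hα0 : 0 < α) (hα1 : α ≤ 1) :
    ∀ (n : ℕ) (K : X → Fin n → ℝ),
      (∀ x u, 0 ≤ K x u) → (∀ x, ∑ u, K x u = 1) →
      (∑ u, (∑ x, K x u * (∑ y', PXY x y')) ^ α) ^ (1 / α) ≤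
        (⨆ x : {x : X // 0 < ∑ y', PXY x y'},
            (∑ y', PXY x.1 y') / (PXY x.1 y / ∑ x', PXY x' y)) *
          (∑ u, (∑ x, K x u * (PXY x y / ∑ x', PXY x' y)) ^ α) ^ (1 / α) := by
  intro n K hK hK1
  set PX : X → ℝ := fun x => ∑ y', PXY x y' with hPX
  set Qc : X → ℝ := fun x => PXY x y / ∑ x', PXY x' y with hQc
  set M : ℝ := ⨆ x : {x : X // 0 < PX x}, PX x.1 / Qc x.1 with hM
  have hPXnn : ∀ x, 0 ≤ PX x := fun x => Finset.sum_nonneg fun y' _ => hnn x y'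
  have hQnn : ∀ x, 0 ≤ Qc x := fun x =>
    div_nonneg (hnn x y) (Finset.sum_nonneg fun x' _ => hnn x' y)
  -- nonempty subtype
  have hne : Nonempty {x : X // 0 < PX x} := by
    by_contra h
    have hall : ∀ x, PX x = 0 := by
      intro x
      by_contra hx
      exact h ⟨⟨x, lt_of_le_of_ne (hPXnn x) (Ne.symm hx)⟩⟩
    have : (∑ x, PX x) = 1 := hsum
    simp [hall] at this
  have hbdd : BddAbove (Set.range fun x : {x : X // 0 < PX x} => PX x.1 / Qc x.1) :=
    Set.Finite.bddAbove (Set.finite_range _)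
  have hM0 : 0 ≤ M := by
    obtain ⟨x0⟩ := hne
    have h1 : PX x0.1 / Qc x0.1 ≤ M := le_ciSup hbdd x0
    exact le_trans (div_nonneg (hPXnn x0.1) (hQnn x0.1)) h1
  have key : ∀ x, PX x ≤ M * Qc x := by
    intro x
    by_cases hx : 0 < PX x
    · have hQx := habs x hx
      have h1 : PX x / Qc x ≤ M := le_ciSup hbdd ⟨x, hx⟩
      calc PX x = PX x / Qc x * Qc x := (div_mul_cancel₀ (PX x) (show Qc x ≠ 0 from hQx.ne')).symm
        _ ≤ M * Qc x := mul_le_mul_of_nonneg_right h1 (hQnn x)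
    · have : PX x = 0 := le_antisymm (not_lt.1 hx) (hPXnn x)
      rw [this]
      exact mul_nonneg hM0 (hQnn x)
  have hPu : ∀ u : Fin n, ∑ x, K x u * PX x ≤ M * ∑ x, K x u * Qc x := by
    intro u
    rw [Finset.mul_sum]
    refine Finset.sum_le_sum fun x _ => ?_
    calc K x u * PX x ≤ K x u * (M * Qc x) :=
          mul_le_mul_of_nonneg_left (key x) (hK x u)
      _ = M * (K x u * Qc x) := by ring
  have hSnn : ∀ u : Fin n, (0:ℝ) ≤ ∑ x, K x u * PX x := fun u =>
    Finset.sum_nonneg fun x _ => mul_nonneg (hK x u) (hPXnn x)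
  have hQSnn : ∀ u : Fin n, (0:ℝ) ≤ ∑ x, K x u * Qc x := fun u =>
    Finset.sum_nonneg fun x _ => mul_nonneg (hK x u) (hQnn x)
  have h1 : (∑ u, (∑ x, K x u * PX x) ^ α) ≤ M ^ α * ∑ u, (∑ x, K x u * Qc x) ^ α := by
    rw [Finset.mul_sum]
    refine Finset.sum_le_sum fun u _ => ?_
    calc (∑ x, K x u * PX x) ^ α ≤ (M * ∑ x, K x u * Qc x) ^ α :=
          Real.rpow_le_rpow (hSnn u) (hPu u) hα0.le
      _ = M ^ α * (∑ x, K x u * Qc x) ^ α := Real.mul_rpow hM0 (hQSnn u)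
  have h2 : (∑ u, (∑ x, K x u * PX x) ^ α) ^ (1 / α) ≤
      (M ^ α * ∑ u, (∑ x, K x u * Qc x) ^ α) ^ (1 / α) :=
    Real.rpow_le_rpow (Finset.sum_nonneg fun u _ => Real.rpow_nonneg (hSnn u) α) h1
      (by positivity)
  calc (∑ u, (∑ x, K x u * PX x) ^ α) ^ (1 / α)
      ≤ (M ^ α * ∑ u, (∑ x, K x u * Qc x) ^ α) ^ (1 / α) := h2
    _ = M * (∑ u, (∑ x, K x u * Qc x) ^ α) ^ (1 / α) := by
        rw [Real.mul_rpow (Real.rpow_nonneg hM0 α)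
          (Finset.sum_nonneg fun u _ => Real.rpow_nonneg (hQSnn u) α),
          ← Real.rpow_mul hM0, mul_one_div_cancel hα0.ne', Real.rpow_one]
end

section
/- Let p ∈ [0,1) and let P_{XY} be the binary erasure source on {0,1} × {0, e, 1} given by P_{XY}(i,i) = (1−p)/2 and P_{XY}(i,e) = p/2 for i ∈ {0,1}. For every even integer n ≥ 2, take 𝒰 = {u_1, …, u_n} and the channel P_{U|X} defined by P_{U|X}(u_{2i−1}|0) = 2/n and P_{U|X}(u_{2i}|0) = 0, and P_{U|X}(u_{2i}|1) = 2/n and P_{U|X}(u_{2i−1}|1) = 0, for i ∈ {1, …, n/2}. Then the ratio γ(P_U) / [∑_{y : P_Y(y) > 0} P_Y(y) γ(P_{U|Y}(·|y))] equals 2(n+1) / (n(1+p) + 2); in particular this ratio tends to 2/(1+p) as n → ∞. -/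
open Finset

/-- The guesswork of a pmf `P` on a finite set `U`: the minimum over all
guessing functions (bijections `G : U → {1,…,n}`) of `∑ u, G(u) · P(u)`. -/
noncomputable def guesswork {U : Type*} [Fintype U] (P : U → ℝ) : ℝ :=
  ⨅ G : U ≃ Fin (Fintype.card U), ∑ u, ((G u).val + 1 : ℝ) * P u

/-- The binary erasure source on `{0,1} × {0, e, 1}` with erasure probability `p`:
`P_{XY}(i,i) = (1-p)/2` and `P_{XY}(i,e) = p/2` for `i ∈ {0,1}`.  Here `𝒳 = Bool`
and `𝒴 = Option Bool`, with `none` playing the role of the erasure symbol `e`. -/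
noncomputable def besPXY (p : ℝ) : Bool → Option Bool → ℝ := fun i oy =>
  match oy with
  | none => p / 2
  | some j => if i = j then (1 - p) / 2 else 0

/-- The channel `P_{U|X}` on `𝒰 = {u_1,…,u_n}` (realized as `Fin n`, 0-based, so
`u_j` is the index `j-1`) given by `P_{U|X}(u_{2i-1}|0) = 2/n`,
`P_{U|X}(u_{2i}|0) = 0`, `P_{U|X}(u_{2i}|1) = 2/n`, `P_{U|X}(u_{2i-1}|1) = 0`,
for `i ∈ {1,…,n/2}`: `x = 0` (i.e. `false`) is spread over the even 0-based
indices and `x = 1` (i.e. `true`) over the odd 0-based indices. -/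
noncomputable def besChannel (n : ℕ) : Bool → Fin n → ℝ := fun x k =>
  match x with
  | false => if k.val % 2 = 0 then 2 / (n : ℝ) else 0
  | true => if k.val % 2 = 1 then 2 / (n : ℝ) else 0

lemma sum_fin_succ_real (n : ℕ) : ∑ v : Fin n, ((v : ℕ) + 1 : ℝ) = n * (n + 1) / 2 := by
  rw [Fin.sum_univ_eq_sum_range (fun i => (i:ℝ)+1) n]
  induction n with
  | zero => simp
  | succ k ih => rw [Finset.sum_range_succ, ih]; push_cast; ring

lemma guesswork_const (n : ℕ) (c : ℝ) :
    guesswork (fun _ : Fin n => c) = c * (n * (n + 1) / 2) := by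
  haveI : Nonempty (Fin n ≃ Fin (Fintype.card (Fin n))) := ⟨Fintype.equivFin _⟩
  unfold guesswork
  have h : ∀ G : Fin n ≃ Fin (Fintype.card (Fin n)),
      ∑ u, ((G u).val + 1 : ℝ) * c = ∑ v : Fin (Fintype.card (Fin n)), ((v : ℕ) + 1 : ℝ) * c :=
    fun G => Equiv.sum_comp G (fun v => ((v : ℕ) + 1 : ℝ) * c)
  simp_rw [h]
  rw [ciInf_const, ← Finset.sum_mul, sum_fin_succ_real, Fintype.card_fin]
  ring

lemma sum_range_card_le (T : Finset ℕ) : ∑ i ∈ range T.card, i ≤ ∑ t ∈ T, t := by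
  induction T using Finset.strongInduction with
  | _ T ih =>
    rcases T.eq_empty_or_nonempty with rfl | hT
    · simp
    · have hM := T.max'_mem hT
      have hsub : T ⊆ range (T.max' hT + 1) :=
        fun x hx => mem_range.mpr (Nat.lt_succ_of_le (T.le_max' x hx))
      have hcard := Finset.card_le_card hsub
      rw [Finset.card_range] at hcard
      have hpos := Finset.card_pos.mpr hT
      have he : (T.erase (T.max' hT)).card = T.card - 1 := Finset.card_erase_of_mem hM
      have ihe := ih _ (Finset.erase_ssubset hM)
      rw [he] at ihe
      have h1 : ∑ i ∈ range T.card, i = ∑ i ∈ range (T.card - 1), i + (T.card - 1) := by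
        conv_lhs => rw [show T.card = (T.card - 1) + 1 by omega]
        rw [Finset.sum_range_succ]
      have h2 : ∑ t ∈ T.erase (T.max' hT), t + T.max' hT = ∑ t ∈ T, t :=
        Finset.sum_erase_add T _ hM
      omega

lemma guesswork_indicator {n : ℕ} (S : Finset (Fin n)) (c : ℝ) (hc : 0 ≤ c) :
    guesswork (fun u => if u ∈ S then c else 0) = c * (S.card * (S.card + 1) / 2) := by
  classical
  set m := S.card with hm
  haveI : Nonempty (Fin n ≃ Fin (Fintype.card (Fin n))) := ⟨Fintype.equivFin _⟩
  have hsum : ∀ G : Fin n ≃ Fin (Fintype.card (Fin n)),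
      ∑ u, ((G u).val + 1 : ℝ) * (if u ∈ S then c else 0)
        = ∑ u ∈ S, ((G u).val + 1 : ℝ) * c := by
    intro G
    simp_rw [mul_ite, mul_zero]
    rw [Finset.sum_ite_mem, univ_inter]
  have hlow : ∀ G : Fin n ≃ Fin (Fintype.card (Fin n)),
      c * (m * (m + 1) / 2) ≤ ∑ u ∈ S, ((G u).val + 1 : ℝ) * c := by
    intro G
    have hinj : Set.InjOn (fun u => (G u).val) S := by
      intro a _ b _ h
      exact G.injective (Fin.val_injective h)
    set T : Finset ℕ := S.image (fun u => (G u).val) with hT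
    have hTcard : T.card = m := Finset.card_image_of_injOn hinj
    have hkey : ∑ i ∈ range m, (i + 1) ≤ ∑ u ∈ S, ((G u).val + 1) := by
      have hsumT : ∑ t ∈ T, (t + 1) = ∑ u ∈ S, ((G u).val + 1) :=
        Finset.sum_image (fun a ha b hb h => hinj ha hb h)
      have h3 := sum_range_card_le T
      rw [hTcard] at h3
      have h4 : ∑ t ∈ T, (t + 1) = ∑ t ∈ T, t + m := by
        rw [Finset.sum_add_distrib, Finset.sum_const, hTcard, smul_eq_mul, mul_one]
      have h5 : ∑ i ∈ range m, (i + 1) = ∑ i ∈ range m, i + m := by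
        rw [Finset.sum_add_distrib, Finset.sum_const, Finset.card_range, smul_eq_mul, mul_one]
      omega
    have hval : (∑ i ∈ range m, ((i:ℝ) + 1)) = m * (m+1) / 2 := by
      rw [← Fin.sum_univ_eq_sum_range (fun i => (i:ℝ)+1) m]; exact sum_fin_succ_real m
    calc c * (m * (m + 1) / 2) = (∑ i ∈ range m, ((i:ℝ) + 1)) * c := by rw [hval]; ring
      _ ≤ (∑ u ∈ S, ((G u).val + 1 : ℝ)) * c := by
          apply mul_le_mul_of_nonneg_right _ hc
          calc (∑ i ∈ range m, ((i:ℝ) + 1)) = ((∑ i ∈ range m, (i + 1) : ℕ) : ℝ) := by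
                push_cast; ring
            _ ≤ ((∑ u ∈ S, ((G u).val + 1) : ℕ) : ℝ) := Nat.cast_le.mpr hkey
            _ = ∑ u ∈ S, ((G u).val + 1 : ℝ) := by push_cast; ring
      _ = ∑ u ∈ S, ((G u).val + 1 : ℝ) * c := by rw [Finset.sum_mul]
  have hcompl : m + Sᶜ.card = n := by
    rw [hm, Finset.card_add_card_compl, Fintype.card_fin]
  let e0 : Fin n ≃ Fin n :=
    ((Equiv.sumCompl (· ∈ S)).symm.trans
      (Equiv.sumCongr S.equivFin
        ((Equiv.subtypeEquivRight (fun x => (Finset.mem_compl (a := x)).symm)).trans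
          Sᶜ.equivFin))).trans (finSumFinEquiv.trans (finCongr hcompl))
  let e : Fin n ≃ Fin (Fintype.card (Fin n)) := e0.trans (finCongr (Fintype.card_fin n).symm)
  have hkeye : ∀ (u : Fin n) (hu : u ∈ S), (e u).val = (S.equivFin ⟨u, hu⟩).val := by
    intro u hu
    simp [e, e0, Equiv.sumCompl_symm_apply_of_pos (p := (· ∈ S)) hu]
  have hupper : ∑ u ∈ S, ((e u).val + 1 : ℝ) * c = c * (m * (m + 1) / 2) := by
    rw [← Finset.sum_attach S (fun u => ((e u).val + 1 : ℝ) * c)]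
    have hx : ∀ x : {y // y ∈ S}, ((e x.1).val + 1 : ℝ) * c = ((S.equivFin x).val + 1 : ℝ) * c := by
      intro x
      rw [hkeye x.1 x.2]
    rw [Finset.sum_congr rfl (fun x _ => hx x), ← Finset.univ_eq_attach,
      Equiv.sum_comp S.equivFin (fun i => ((i : ℕ) + 1 : ℝ) * c), ← Finset.sum_mul,
      sum_fin_succ_real]
    ring
  unfold guesswork
  apply le_antisymm
  · calc (⨅ G : Fin n ≃ Fin (Fintype.card (Fin n)),
          ∑ u, ((G u).val + 1 : ℝ) * (if u ∈ S then c else 0))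
        ≤ ∑ u, ((e u).val + 1 : ℝ) * (if u ∈ S then c else 0) := by
          apply ciInf_le ⟨c * (m * (m + 1) / 2), ?_⟩
          rintro x ⟨G, rfl⟩
          exact le_trans (hlow G) (le_of_eq (hsum G).symm)
      _ = c * (m * (m + 1) / 2) := by rw [hsum e, hupper]
  · exact le_ciInf fun G => le_trans (hlow G) (le_of_eq (hsum G).symm)

lemma card_parity (m b : ℕ) (hb : b < 2) :
    ((univ : Finset (Fin (2*m))).filter (fun u => u.val % 2 = b)).card = m := by
  have h : ((univ : Finset (Fin (2*m))).filter (fun u => u.val % 2 = b)).card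
      = (univ : Finset (Fin m)).card := by
    refine Finset.card_nbij' (fun (u : Fin (2*m)) => (⟨u.val / 2, by have := u.isLt; omega⟩ : Fin m))
      (fun (i : Fin m) => (⟨2 * i.val + b, by have := i.isLt; omega⟩ : Fin (2*m)))
      (fun a _ => Finset.mem_univ _) (fun a _ => ?_) (fun a ha => ?_) (fun a _ => ?_)
    · simp only [Finset.mem_coe, Finset.mem_filter]; exact ⟨Finset.mem_univ _, by omega⟩
    · simp only [Finset.mem_coe, Finset.mem_filter] at ha; ext; simp only []; omega
    · ext; simp only []; omega
  simpa using h

lemma guesswork_parity (n m b : ℕ) (hn : n = 2*m) (hb : b < 2) (c : ℝ) (hc : 0 ≤ c) :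
    guesswork (fun u : Fin n => if u.val % 2 = b then c else 0) = c * (m * (m+1) / 2) := by
  subst hn
  have heq : (fun u : Fin (2*m) => if u.val % 2 = b then c else 0)
      = (fun u => if u ∈ (univ : Finset (Fin (2*m))).filter (fun u => u.val % 2 = b)
          then c else 0) := by
    funext u; simp [Finset.mem_filter]
  rw [heq, guesswork_indicator _ c hc, card_parity m b hb]

/-- **Achievability for the binary erasure source.**
For `p ∈ [0,1)` and the binary erasure source, for every even `n ≥ 2` the channel
`besChannel n` yields the ratio
`γ(P_U) / ∑_{y : P_Y(y)>0} P_Y(y) γ(P_{U|Y}(·|y)) = 2(n+1)/(n(1+p)+2)`;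
in particular this ratio tends to `2/(1+p)` as `n → ∞`. -/
theorem maximal_guesswork_leakage_BES_achievability
    (p : ℝ) (hp0 : 0 ≤ p) (hp1 : p < 1) :
    (∀ n : ℕ, Even n → 2 ≤ n →
      guesswork (fun u : Fin n => ∑ x, besChannel n x u * (∑ y', besPXY p x y')) /
          (∑ y ∈ univ.filter (fun y => 0 < ∑ x, besPXY p x y),
            (∑ x, besPXY p x y) *
              guesswork (fun u : Fin n =>
                ∑ x, besChannel n x u * (besPXY p x y / ∑ x', besPXY p x' y)))
        = 2 * ((n : ℝ) + 1) / ((n : ℝ) * (1 + p) + 2))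
    ∧ Filter.Tendsto
        (fun n : ℕ => 2 * ((n : ℝ) + 1) / ((n : ℝ) * (1 + p) + 2))
        Filter.atTop (nhds (2 / (1 + p))) := by
  have h1p : (0:ℝ) < 1 - p := by linarith
  constructor
  · intro n hev hn2
    obtain ⟨m, hm⟩ := hev
    have hm2 : n = 2 * m := by omega
    have hmpos : 1 ≤ m := by omega
    have hn0 : (0:ℝ) < (n:ℝ) := by
      have : (2:ℝ) ≤ (n:ℝ) := by exact_mod_cast hn2
      linarith
    have hnm : (n:ℝ) = 2*(m:ℝ) := by exact_mod_cast hm2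
    have hm0 : (0:ℝ) < (m:ℝ) := by exact_mod_cast hmpos
    -- marginal of X
    have hmarg : ∀ x : Bool, (∑ y', besPXY p x y') = 1/2 := by
      intro x
      rw [Fintype.sum_option, Fintype.sum_bool]
      rcases x <;> simp [besPXY] <;> try ring
    -- numerator
    have hnum : guesswork (fun u : Fin n => ∑ x, besChannel n x u * (∑ y', besPXY p x y'))
        = ((n:ℝ)+1)/2 := by
      have hnum_fun : (fun u : Fin n => ∑ x, besChannel n x u * (∑ y', besPXY p x y'))
          = fun _ : Fin n => 1/(n:ℝ) := by
        funext u
        simp only [hmarg]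
        rw [Fintype.sum_bool]
        rcases Nat.mod_two_eq_zero_or_one u.val with h | h <;>
          simp [besChannel, h] <;> try ring
      rw [hnum_fun, guesswork_const]
      field_simp
      try ring
    -- P_Y values
    have hPnone : (∑ x, besPXY p x (none : Option Bool)) = p := by
      rw [Fintype.sum_bool]; show p/2 + p/2 = p; ring
    have hPsome : ∀ j : Bool, (∑ x, besPXY p x (some j)) = (1-p)/2 := by
      intro j; rw [Fintype.sum_bool]; rcases j <;> simp [besPXY]
    have hne : ((1:ℝ)-p)/2 ≠ 0 := by positivity
    -- conditional guesswork, y = some j (denominator already evaluated)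
    have hgsome : ∀ j : Bool,
        guesswork (fun u : Fin n =>
          ∑ x, besChannel n x u * (besPXY p x (some j) / ((1-p)/2)))
        = ((n:ℝ)+2)/4 := by
      intro j
      rcases j
      · have hfun : (fun u : Fin n => ∑ x, besChannel n x u *
            (besPXY p x (some false) / ((1-p)/2)))
            = fun u : Fin n => if u.val % 2 = 0 then 2/(n:ℝ) else 0 := by
          funext u
          rw [Fintype.sum_bool]
          simp [besPXY, besChannel, div_self hne]
        rw [hfun, guesswork_parity n m 0 hm2 (by omega) _ (by positivity)]
        rw [hnm]
        field_simp
        ring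
      · have hfun : (fun u : Fin n => ∑ x, besChannel n x u *
            (besPXY p x (some true) / ((1-p)/2)))
            = fun u : Fin n => if u.val % 2 = 1 then 2/(n:ℝ) else 0 := by
          funext u
          rw [Fintype.sum_bool]
          simp [besPXY, besChannel, div_self hne]
        rw [hfun, guesswork_parity n m 1 hm2 (by omega) _ (by positivity)]
        rw [hnm]
        field_simp
        ring
    -- conditional guesswork, y = none (when p > 0)
    have hgnone : 0 < p → guesswork (fun u : Fin n =>
        ∑ x, besChannel n x u * (besPXY p x (none : Option Bool) / p))
        = ((n:ℝ)+1)/2 := by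
      intro hp
      have hfun : (fun u : Fin n =>
          ∑ x, besChannel n x u * (besPXY p x (none : Option Bool) / p))
          = fun _ : Fin n => 1/(n:ℝ) := by
        funext u
        rw [Fintype.sum_bool]
        show besChannel n true u * (p/2/p) + besChannel n false u * (p/2/p) = 1/(n:ℝ)
        have hhalf : p/2/p = 1/2 := by
          rw [div_div, div_eq_div_iff (by linarith : (0:ℝ) < 2*p).ne' (two_ne_zero)]
          ring
        rw [hhalf]
        rcases Nat.mod_two_eq_zero_or_one u.val with h | h <;>
          simp [besChannel, h] <;> try ring
      rw [hfun, guesswork_const]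
      field_simp
      try ring
    -- denominator
    have hden : (∑ y ∈ univ.filter (fun y => 0 < ∑ x, besPXY p x y),
        (∑ x, besPXY p x y) * guesswork (fun u : Fin n =>
          ∑ x, besChannel n x u * (besPXY p x y / ∑ x', besPXY p x' y)))
        = ((n:ℝ)*(1+p)+2)/4 := by
      rw [Finset.sum_filter, Fintype.sum_option]
      simp only [hPnone, hPsome]
      rw [Fintype.sum_bool]
      simp only [hgsome]
      have hhalf : (0:ℝ) < (1-p)/2 := by positivity
      rw [if_pos hhalf]
      rcases hp0.lt_or_eq with hp | hp
      · rw [if_pos hp, hgnone hp]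
        ring
      · rw [if_neg (by rw [← hp]; exact lt_irrefl 0), ← hp]
        ring
    rw [hnum, hden]
    have hpos : (0:ℝ) < (n:ℝ)*(1+p)+2 := by nlinarith
    rw [div_eq_div_iff (by positivity : (0:ℝ) < ((n:ℝ)*(1+p)+2)/4).ne' hpos.ne']
    ring
  · have h0 : Filter.Tendsto (fun n : ℕ => 1/(n:ℝ)) Filter.atTop (nhds 0) :=
      tendsto_one_div_atTop_nhds_zero_nat
    have hA : Filter.Tendsto (fun n : ℕ => 2 + 2*(1/(n:ℝ))) Filter.atTop (nhds 2) := by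
      have h1 := h0.const_mul (2:ℝ)
      have := (tendsto_const_nhds (x := (2:ℝ)) (f := Filter.atTop (α := ℕ))).add h1
      simpa using this
    have hB : Filter.Tendsto (fun n : ℕ => (1+p) + 2*(1/(n:ℝ))) Filter.atTop (nhds (1+p)) := by
      have h1 := h0.const_mul (2:ℝ)
      have := (tendsto_const_nhds (x := (1+p:ℝ)) (f := Filter.atTop (α := ℕ))).add h1
      simpa using this
    have hp1' : (1:ℝ)+p ≠ 0 := by linarith
    have hlim := hA.div hB hp1'
    apply hlim.congr'
    filter_upwards [Filter.eventually_ge_atTop 1] with n hn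
    have hn0 : (0:ℝ) < (n:ℝ) := by exact_mod_cast hn
    have hden2 : (0:ℝ) < (1+p) + 2*(1/(n:ℝ)) := by
      have h2 : (0:ℝ) < 1/(n:ℝ) := by positivity
      linarith
    have hden3 : (0:ℝ) < (n:ℝ)*(1+p)+2 := by nlinarith
    show (2 + 2*(1/(n:ℝ))) / ((1+p) + 2*(1/(n:ℝ))) = 2 * ((n:ℝ)+1) / ((n:ℝ)*(1+p)+2)
    rw [div_eq_div_iff hden2.ne' hden3.ne']
    field_simp
end
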